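/- Let (G, Ḡ, G*, φ₊, φ₋) be a factorized group and define s : G* → G* by s(x) = ψ⁻¹(φ₋(x)⁻¹ ψ(x) φ₋(x)). Then for all x ∈ G*, R(x, s(x)) = (s(x), x), where R(x,y) = (xL(x,y), xR(x,y)) is the associated Yang–Baxter map. Moreover, s(x) is the unique z ∈ G* with R(x, z) = (z, x). -/

import Mathlib

/-- A factorized group: groups `Gb` (Ḡ) and `Gs` (G*), a normal subgroup `G` of `Gb`,
and group homomorphisms `φp, φm : Gs → Gb` such that `ψ x = φp x * (φm x)⁻¹` is a
bijection from `Gs` onto `G`. -/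
structure FactorizedGroup (Gb Gs : Type*) [Group Gb] [Group Gs] where
  G : Subgroup Gb
  normal : G.Normal
  φp : Gs →* Gb
  φm : Gs →* Gb
  mem_G : ∀ x : Gs, φp x * (φm x)⁻¹ ∈ G
  bij : Function.Bijective (fun x : Gs => (⟨φp x * (φm x)⁻¹, mem_G x⟩ : G))

namespace FactorizedGroup

variable {Gb Gs : Type*} [Group Gb] [Group Gs] (FG : FactorizedGroup Gb Gs)

/-- The map `ψ : G* → Ḡ`. -/
def ψ (x : Gs) : Gb := FG.φp x * (FG.φm x)⁻¹

/-- The inverse of `ψ` (defined on the image `G` of `ψ`). -/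
noncomputable def ψinv (g : Gb) : Gs :=
  haveI : Nonempty Gs := ⟨1⟩
  Function.invFun FG.ψ g

/-- `xR(x,y) = ψ⁻¹(φ₋(x) ψ(y) φ₋(x)⁻¹)`. -/
noncomputable def xR (x y : Gs) : Gs := FG.ψinv (FG.φm x * FG.ψ y * (FG.φm x)⁻¹)

/-- `xL(x,y) = ψ⁻¹(φ₊(xR(x,y))⁻¹ ψ(x) φ₊(xR(x,y)))`. -/
noncomputable def xL (x y : Gs) : Gs :=
  FG.ψinv ((FG.φp (FG.xR x y))⁻¹ * FG.ψ x * FG.φp (FG.xR x y))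

/-- The Yang–Baxter map `R(x,y) = (xL(x,y), xR(x,y))`. -/
noncomputable def Rmap : Gs × Gs → Gs × Gs := fun p => (FG.xL p.1 p.2, FG.xR p.1 p.2)

end FactorizedGroup


/-- The stabilization map `s(x) = ψ⁻¹(φ₋(x)⁻¹ ψ(x) φ₋(x))`. -/
noncomputable def FactorizedGroup.s {Gb Gs : Type*} [Group Gb] [Group Gs]
    (FG : FactorizedGroup Gb Gs) (x : Gs) : Gs :=
  FG.ψinv ((FG.φm x)⁻¹ * FG.ψ x * FG.φm x)


/-!
Conjugating `ψ x = φ₊(x) φ₋(x)⁻¹` by `φ₊(x)` or by `φ₋(x)` gives the same element `φ₋(x)⁻¹ φ₊(x)`,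
and this is `ψ (s x)`. Since `ψ` is injective and `ψ (xR x z) = φ₋(x) ψ(z) φ₋(x)⁻¹`, the equation
`xR x z = x` says exactly `ψ z = φ₋(x)⁻¹ ψ(x) φ₋(x)`, i.e. `z = s x`; and once `xR x z = x`,
`xL x z = ψ⁻¹(φ₊(x)⁻¹ ψ(x) φ₊(x)) = s x`.
-/

namespace FactorizedGroup

variable {Gb Gs : Type*} [Group Gb] [Group Gs] (FG : FactorizedGroup Gb Gs)

lemma ψ_injective : Function.Injective FG.ψ :=
  fun _ _ h => FG.bij.injective (Subtype.ext h)

lemma ψinv_ψ (x : Gs) : FG.ψinv (FG.ψ x) = x :=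
  have : Nonempty Gs := ⟨1⟩
  Function.leftInverse_invFun FG.ψ_injective x

lemma ψ_ψinv {g : Gb} (hg : g ∈ FG.G) : FG.ψ (FG.ψinv g) = g := by
  obtain ⟨y, hy⟩ := FG.bij.surjective ⟨g, hg⟩
  have hψy : FG.ψ y = g := congrArg Subtype.val hy
  rw [← hψy, FG.ψinv_ψ]

lemma conj_ψ_mem (g : Gb) (y : Gs) : g * FG.ψ y * g⁻¹ ∈ FG.G :=
  FG.normal.conj_mem _ (FG.mem_G y) g

lemma inv_φp_mul_ψ_mul_φp (x : Gs) :
    (FG.φp x)⁻¹ * FG.ψ x * FG.φp x = (FG.φm x)⁻¹ * FG.φp x := by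
  simp only [ψ]
  group

lemma inv_φm_mul_ψ_mul_φm (x : Gs) :
    (FG.φm x)⁻¹ * FG.ψ x * FG.φm x = (FG.φm x)⁻¹ * FG.φp x := by
  simp only [ψ]
  group

lemma ψ_xR (x y : Gs) : FG.ψ (FG.xR x y) = FG.φm x * FG.ψ y * (FG.φm x)⁻¹ :=
  FG.ψ_ψinv (FG.conj_ψ_mem _ y)

lemma ψ_s (x : Gs) : FG.ψ (FG.s x) = (FG.φm x)⁻¹ * FG.ψ x * FG.φm x :=
  FG.ψ_ψinv (by simpa using FG.conj_ψ_mem (FG.φm x)⁻¹ x)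

lemma xR_eq_self_iff {x z : Gs} : FG.xR x z = x ↔ z = FG.s x := by
  rw [← FG.ψ_injective.eq_iff, FG.ψ_xR, ← FG.ψ_injective.eq_iff, FG.ψ_s]
  constructor
  · intro h
    rw [← h]
    group
  · intro h
    rw [h]
    group

lemma xL_eq_s_of_xR_eq_self {x z : Gs} (h : FG.xR x z = x) : FG.xL x z = FG.s x := by
  rw [xL, h, s, FG.inv_φp_mul_ψ_mul_φp, FG.inv_φm_mul_ψ_mul_φm]

end FactorizedGroup

/-- For every `x ∈ G*`, `R(x, s(x)) = (s(x), x)`, and `s(x)` is the unique `z` with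
`R(x, z) = (z, x)`. -/
theorem factorizedGroup_s_spec {Gb Gs : Type*} [Group Gb] [Group Gs]
    (FG : FactorizedGroup Gb Gs) (x : Gs) :
    FG.Rmap (x, FG.s x) = (FG.s x, x) ∧
      ∀ z : Gs, FG.Rmap (x, z) = (z, x) → z = FG.s x := by
  have hR : FG.xR x (FG.s x) = x := FG.xR_eq_self_iff.2 rfl
  exact ⟨Prod.ext (FG.xL_eq_s_of_xR_eq_self hR) hR,
    fun z hz => FG.xR_eq_self_iff.1 (congrArg Prod.snd hz)⟩
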